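/- For every partial epistemic interpretation M and individual name a: M,w ⊨ ◇⁺{a} ⊑ □⁺{a} holds for every world w if and only if for all worlds w, v with w ∼ v, if a^{I_w} is defined then a^{I_v} is defined and a^{I_w} = a^{I_v}. Hence the concept inclusion ◇⁺{a} ⊑ □⁺{a}, imposed at all worlds, enforces rigid designation of a within each ∼-equivalence class. -/
import Mathlib


/-- Concepts of the modal DL `ML_ALCOu` (no definite descriptions). -/
inductive Cpt : Type where
  | atom  : ℕ → Cpt        -- concept name
  | nom   : ℕ → Cpt        -- nominal {a}, a an individual name
  | neg   : Cpt → Cpt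
  | inter : Cpt → Cpt → Cpt
  | ex    : ℕ → Cpt → Cpt  -- ∃r.C, r a role name
  | exu   : Cpt → Cpt      -- ∃u.C, u the universal role
  | dia   : Cpt → Cpt      -- ◇C
  deriving DecidableEq

/-- Formulas. -/
inductive Fm : Type where
  | sub : Cpt → Cpt → Fm   -- C ⊑ D
  | neg : Fm → Fm
  | and : Fm → Fm → Fm
  | dia : Fm → Fm
  deriving DecidableEq

/-- Partial epistemic interpretation (constant domain). -/
structure PEI where
  W : Type
  hW : Nonempty W
  rel : W → W → Prop
  hrel : Equivalence rel
  Δ : Type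
  hΔ : Nonempty Δ
  cI : W → ℕ → Set Δ
  rI : W → ℕ → Set (Δ × Δ)
  iI : W → ℕ → Option Δ

/-- Extension of a concept at a world. -/
def cExt (M : PEI) : M.W → Cpt → Set M.Δ
  | w, .atom A    => M.cI w A
  | w, .nom a     => {d | M.iI w a = some d}
  | w, .neg C     => (cExt M w C)ᶜ
  | w, .inter C D => cExt M w C ∩ cExt M w D
  | w, .ex r C    => {d | ∃ e, (d, e) ∈ M.rI w r ∧ e ∈ cExt M w C}
  | w, .exu C     => {_d : M.Δ | ∃ e, e ∈ cExt M w C}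
  | w, .dia C     => {d | ∃ v, M.rel w v ∧ d ∈ cExt M v C}

/-- Satisfaction of a formula at a world. -/
def sat (M : PEI) : M.W → Fm → Prop
  | w, .sub C D => cExt M w C ⊆ cExt M w D
  | w, .neg φ   => ¬ sat M w φ
  | w, .and φ ψ => sat M w φ ∧ sat M w ψ
  | w, .dia φ   => ∃ v, M.rel w v ∧ sat M v φ

/-- Standard abbreviations. -/
def cBot : Cpt := .inter (.atom 0) (.neg (.atom 0))
def cTop : Cpt := .neg cBot
def cOr (C D : Cpt) : Cpt := .neg (.inter (.neg C) (.neg D))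
def cImp (C D : Cpt) : Cpt := cOr (.neg C) D
def cAllu (C : Cpt) : Cpt := .neg (.exu (.neg C))
def cBox (C : Cpt) : Cpt := .neg (.dia (.neg C))
def cDiaP (C : Cpt) : Cpt := cOr C (.dia C)
def cBoxP (C : Cpt) : Cpt := .inter C (cBox C)
def fBoxP (φ : Fm) : Fm := .and φ (.neg (.dia (.neg φ)))

/-- Totality: every individual name denotes at every world. -/
def PEI.total (M : PEI) : Prop := ∀ w a, (M.iI w a).isSome

/-- `◇⁺{a} ⊑ □⁺{a}` holds at every world iff `a` is rigidly designated
within each `∼`-equivalence class. -/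
theorem rigid_CI_iff_rigid_on_classes (M : PEI) (a : ℕ) :
    (∀ w : M.W, sat M w (.sub (cDiaP (.nom a)) (cBoxP (.nom a)))) ↔
    (∀ w v : M.W, M.rel w v →
      ∀ d : M.Δ, M.iI w a = some d → M.iI v a = some d) := by
  simp only [sat, cDiaP, cBoxP, cOr, cBox, cExt, Set.subset_def, Set.mem_setOf_eq,
    Set.mem_compl_iff, Set.mem_inter_iff, not_and, not_not, not_exists]
  constructor
  · intro h w v hwv d hd
    exact (h w d (fun hne _ => hne hd)).2 v hwv
  · intro h w d hp
    by_cases hc : M.iI w a = some d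
    · exact ⟨hc, fun v hwv => h w v hwv d hc⟩
    · exfalso
      obtain ⟨v, hv⟩ := not_forall.mp (hp hc)
      obtain ⟨hwv, hvd⟩ := Classical.not_imp.mp hv
      exact hc (h v w (M.hrel.symm hwv) d (not_not.mp hvd))
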